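/- Fix ρ ∈ 𝒞 and P ∈ 𝒫^ρ_d. Then there exists z_* ∈ ℝ^d such that MD^ρ(z_*,P) = sup_{z ∈ ℝ^d} MD^ρ(z,P), i.e. the halfspace M-depth attains its supremum. -/

import Mathlib

open MeasureTheory Set Filter
open scoped RealInnerProductSpace ENNReal

noncomputable section

/-- The class `𝒞` of loss functions: convex, nonnegative, even, vanishing only at `0`. -/
def LossClass (ρ : ℝ → ℝ) : Prop :=
  ConvexOn ℝ Set.univ ρ ∧ (∀ t, 0 ≤ ρ t) ∧ (∀ t, ρ (-t) = ρ t) ∧ (∀ t, ρ t = 0 ↔ t = 0)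

/-- `ψ` is the left-derivative of `ρ`. -/
def IsLeftDeriv (ρ ψ : ℝ → ℝ) : Prop :=
  ∀ x : ℝ, HasDerivWithinAt ρ (ψ x) (Set.Iio x) x

/-- `G^ρ_Q(θ) = E_Q[|ψ₋(Y−θ)|·𝟙[Y ≤ θ]] / E_Q[|ψ₋(Y−θ)|]` (equal to `0` when the
denominator vanishes, by the Lean convention for division by zero). -/
def Gfun (ψ : ℝ → ℝ) (Q : Measure ℝ) (θ : ℝ) : ℝ :=
  (∫ y, |ψ (y - θ)| * (if y ≤ θ then 1 else 0) ∂Q) / ∫ y, |ψ (y - θ)| ∂Q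

/-- The order-`α` M-quantile `θ^ρ_α(Q) = inf{θ : G^ρ_Q(θ) ≥ α}` of a law `Q` on `ℝ`. -/
def MQuant (ψ : ℝ → ℝ) (Q : Measure ℝ) (α : ℝ) : ℝ :=
  sInf {θ : ℝ | α ≤ Gfun ψ Q θ}

/-- The pushforward `P_u` of `P` under `z ↦ u'z`. -/
def dirProj {d : ℕ} (P : Measure (EuclideanSpace ℝ (Fin d)))
    (u : EuclideanSpace ℝ (Fin d)) : Measure ℝ :=
  P.map (fun z => ⟪u, z⟫)

/-- The order-`α` M-quantile halfspace `H^ρ_{α,u}(P) = {z : u'z ≥ θ^ρ_α(P_u)}`. -/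
def MHalf {d : ℕ} (ψ : ℝ → ℝ) (P : Measure (EuclideanSpace ℝ (Fin d))) (α : ℝ)
    (u : EuclideanSpace ℝ (Fin d)) : Set (EuclideanSpace ℝ (Fin d)) :=
  {z | MQuant ψ (dirProj P u) α ≤ ⟪u, z⟫}

/-- The order-`α` M-quantile hyperplane `π^ρ_{α,u}(P) = {z : u'z = θ^ρ_α(P_u)}`. -/
def MHyp {d : ℕ} (ψ : ℝ → ℝ) (P : Measure (EuclideanSpace ℝ (Fin d))) (α : ℝ)
    (u : EuclideanSpace ℝ (Fin d)) : Set (EuclideanSpace ℝ (Fin d)) :=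
  {z | ⟪u, z⟫ = MQuant ψ (dirProj P u) α}

/-- The order-`α` M-quantile region `R^ρ_α(P) = ⋂_{u ∈ S^{d−1}} H^ρ_{α,u}(P)`. -/
def MRegion {d : ℕ} (ψ : ℝ → ℝ) (P : Measure (EuclideanSpace ℝ (Fin d))) (α : ℝ) :
    Set (EuclideanSpace ℝ (Fin d)) :=
  ⋂ u ∈ {u : EuclideanSpace ℝ (Fin d) | ‖u‖ = 1}, MHalf ψ P α u

/-- The halfspace M-depth `MD^ρ(z,P) = sup{α > 0 : z ∈ R^ρ_α(P)}` (with `sup ∅ = 0`,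
which is the Lean convention for `sSup` of the empty set of reals). -/
def MDepth {d : ℕ} (ψ : ℝ → ℝ) (P : Measure (EuclideanSpace ℝ (Fin d)))
    (z : EuclideanSpace ℝ (Fin d)) : ℝ :=
  sSup {α : ℝ | α ∈ Set.Ioo (0 : ℝ) 1 ∧ z ∈ MRegion ψ P α}

/-- The C-support `C_P = {z : P[{y : u'y ≤ u'z}] > 0 for every unit u}`. -/
def Csupport {d : ℕ} (P : Measure (EuclideanSpace ℝ (Fin d))) :
    Set (EuclideanSpace ℝ (Fin d)) :=
  {z | ∀ u : EuclideanSpace ℝ (Fin d), ‖u‖ = 1 → 0 < P {y | ⟪u, y⟫ ≤ ⟪u, z⟫}}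

/-!
Each region `MRegion ψ P α` is an intersection of closed halfspaces, bounded because the
halfspaces in the directions `±bᵢ` of an orthonormal basis already confine it to a box; so it is
compact. For a law `Q` the ratio `Gfun ψ Q θ` tends to `0` as `θ → -∞` and to `1` as `θ → ∞`:
the denominator stays away from `0` (it dominates `|ψ (∓1)|` times the mass of a half-line),
while the numerator, resp. the complementary integral over `Ioi θ`, is dominated by a tail of the
integrable `|ψ (· - 0)|`. Hence every `MQuant ψ Q α` with `0 < α < 1` is an infimum of a nonempty
set bounded below, and it is nondecreasing in `α`, so the regions decrease in `α`. If `A` is the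
supremum of the depth, the regions of order `β < A` form a directed family of nonempty compact
sets, and any point of their intersection has depth `A`.
-/

open Topology

section Bounded

variable {E : Type*} [NormedAddCommGroup E] [InnerProductSpace ℝ E] [FiniteDimensional ℝ E]

lemma isBounded_of_forall_bddBelow_inner {S : Set E}
    (h : ∀ u : E, ‖u‖ = 1 → BddBelow ((⟪u, ·⟫) '' S)) : Bornology.IsBounded S := by
  let b := stdOrthonormalBasis ℝ E
  have hcoord : ∀ i, ∃ C, ∀ z ∈ S, |⟪b i, z⟫| ≤ C := by
    intro i
    obtain ⟨a, ha⟩ := h (b i) (b.orthonormal.1 i)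
    obtain ⟨a', ha'⟩ := h (-b i) (by rw [norm_neg]; exact b.orthonormal.1 i)
    refine ⟨max (-a) (-a'), fun z hz => abs_le.2 ⟨?_, ?_⟩⟩
    · have := ha (mem_image_of_mem _ hz); linarith [le_max_left (-a) (-a')]
    · have := ha' (mem_image_of_mem _ hz); simp only [inner_neg_left] at this
      linarith [le_max_right (-a) (-a')]
  choose C hC using hcoord
  refine isBounded_iff_forall_norm_le.2 ⟨∑ i, C i, fun z hz => ?_⟩
  calc ‖z‖ = ‖∑ i, ⟪b i, z⟫ • b i‖ := by rw [b.sum_repr' z]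
    _ ≤ ∑ i, ‖⟪b i, z⟫ • b i‖ := norm_sum_le _ _
    _ = ∑ i, |⟪b i, z⟫| := by simp [norm_smul, b.orthonormal.1]
    _ ≤ ∑ i, C i := Finset.sum_le_sum fun i _ => hC i z hz

end Bounded

section NestedDepth

variable {E : Type*}

-- `MDepth ψ P` is `nestedDepth (MRegion ψ P)` by definition.
def nestedDepth (R : ℝ → Set E) (z : E) : ℝ :=
  sSup {α : ℝ | α ∈ Ioo (0 : ℝ) 1 ∧ z ∈ R α}

variable {R : ℝ → Set E}

lemma nestedDepth_nonneg (z : E) : 0 ≤ nestedDepth R z :=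
  Real.sSup_nonneg fun _ hα => hα.1.1.le

lemma nestedDepth_le_one (z : E) : nestedDepth R z ≤ 1 :=
  Real.sSup_le (fun _ hα => hα.1.2.le) zero_le_one

lemma le_nestedDepth {z : E} {β : ℝ} (hβ : β ∈ Ioo (0 : ℝ) 1) (hz : z ∈ R β) :
    β ≤ nestedDepth R z :=
  le_csSup ⟨1, fun _ hα => hα.1.2.le⟩ ⟨hβ, hz⟩

lemma mem_of_lt_nestedDepth (hR : ∀ β γ, 0 < β → β ≤ γ → γ < 1 → R γ ⊆ R β) {z : E} {β : ℝ}
    (hβ : 0 < β) (hz : β < nestedDepth R z) : z ∈ R β := by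
  have hne : {α : ℝ | α ∈ Ioo (0 : ℝ) 1 ∧ z ∈ R α}.Nonempty := by
    by_contra h
    rw [not_nonempty_iff_eq_empty] at h
    simp only [nestedDepth, h, Real.sSup_empty] at hz
    linarith
  obtain ⟨γ, ⟨hγ, hzγ⟩, hβγ⟩ := exists_lt_of_lt_csSup hne hz
  exact hR β γ hβ hβγ.le hγ.2 hzγ

lemma exists_nestedDepth_eq_iSup [TopologicalSpace E] [T2Space E] [Nonempty E]
    (hR : ∀ β γ, 0 < β → β ≤ γ → γ < 1 → R γ ⊆ R β) (hcpt : ∀ β ∈ Ioo (0 : ℝ) 1, IsCompact (R β)) :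
    ∃ zs, nestedDepth R zs = ⨆ z, nestedDepth R z := by
  have hbdd : BddAbove (range (nestedDepth R)) := ⟨1, forall_mem_range.2 nestedDepth_le_one⟩
  set A := ⨆ z, nestedDepth R z
  have hA1 : A ≤ 1 := ciSup_le nestedDepth_le_one
  obtain ⟨z₀⟩ := ‹Nonempty E›
  rcases ((nestedDepth_nonneg z₀).trans (le_ciSup hbdd z₀)).eq_or_lt with hA0 | hApos
  · exact ⟨z₀, le_antisymm (le_ciSup hbdd z₀) (hA0.symm.le.trans (nestedDepth_nonneg z₀))⟩
  have hIoo : ∀ β : Ioo (0 : ℝ) A, (β : ℝ) ∈ Ioo (0 : ℝ) 1 := fun β => ⟨β.2.1, β.2.2.trans_le hA1⟩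
  have hne : ∀ β : Ioo (0 : ℝ) A, (R β).Nonempty := fun β => by
    obtain ⟨z, hz⟩ := exists_lt_of_lt_ciSup β.2.2
    exact ⟨z, mem_of_lt_nestedDepth hR β.2.1 hz⟩
  have hdir : Directed (· ⊇ ·) (fun β : Ioo (0 : ℝ) A => R β) := fun β γ =>
    ⟨⟨max β γ, lt_max_of_lt_left β.2.1, max_lt β.2.2 γ.2.2⟩,
      hR β _ β.2.1 (le_max_left _ _) (max_lt (hIoo β).2 (hIoo γ).2),
      hR γ _ γ.2.1 (le_max_right _ _) (max_lt (hIoo β).2 (hIoo γ).2)⟩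
  have : Nonempty (Ioo (0 : ℝ) A) := ⟨⟨A / 2, half_pos hApos, half_lt_self hApos⟩⟩
  obtain ⟨zs, hzs⟩ := IsCompact.nonempty_iInter_of_directed_nonempty_isCompact_isClosed _ hdir
    hne (fun β => hcpt β (hIoo β)) (fun β => (hcpt β (hIoo β)).isClosed)
  refine ⟨zs, le_antisymm (le_ciSup hbdd zs) (le_of_forall_lt_imp_le_of_dense fun β hβ => ?_)⟩
  rcases le_or_gt β 0 with hβ0 | hβ0
  · exact hβ0.trans (nestedDepth_nonneg zs)
  · let β' : Ioo (0 : ℝ) A := ⟨β, hβ0, hβ⟩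
    exact le_nestedDepth (hIoo β') (mem_iInter.1 hzs β')

end NestedDepth

section Tails

variable {μ : Measure ℝ} {g : ℝ → ℝ}

lemma tendsto_setIntegral_Ioi_atTop (hg : Integrable g μ) :
    Tendsto (fun θ => ∫ y in Ioi θ, g y ∂μ) atTop (𝓝 0) := by
  have := tendsto_setIntegral_of_antitone (μ := μ) (fun θ : ℝ => measurableSet_Ioi)
    (fun _ _ h => Ioi_subset_Ioi h) ⟨0, hg.integrableOn⟩
  have hempty : ⋂ θ : ℝ, Ioi θ = ∅ := iInter_eq_empty_iff.2 fun y => ⟨y, lt_irrefl y⟩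
  rwa [hempty, setIntegral_empty] at this

lemma tendsto_setIntegral_Iic_atBot (hg : Integrable g μ) :
    Tendsto (fun θ => ∫ y in Iic θ, g y ∂μ) atBot (𝓝 0) := by
  have := tendsto_setIntegral_of_antitone (μ := μ) (fun θ : ℝ => measurableSet_Iic (a := -θ))
    (fun _ _ h => Iic_subset_Iic.2 (neg_le_neg h)) ⟨0, hg.integrableOn⟩
  have hempty : ⋂ θ : ℝ, Iic (-θ) = ∅ := iInter_eq_empty_iff.2 fun y => ⟨-y + 1, by simp⟩
  rw [hempty, setIntegral_empty] at this
  simpa [Function.comp_def] using this.comp tendsto_neg_atBot_atTop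

end Tails

namespace LossClass

variable {ρ : ℝ → ℝ}

lemma apply_zero (hρ : LossClass ρ) : ρ 0 = 0 := (hρ.2.2.2 0).2 rfl

lemma apply_pos (hρ : LossClass ρ) {t : ℝ} (ht : t ≠ 0) : 0 < ρ t :=
  (hρ.2.1 t).lt_of_ne fun h => ht ((hρ.2.2.2 t).1 h.symm)

end LossClass

namespace IsLeftDeriv

variable {ρ ψ : ℝ → ℝ}

lemma le_of_forall_slope_le (hψ : IsLeftDeriv ρ ψ) {x c : ℝ}
    (h : ∀ t < x, slope ρ x t ≤ c) : ψ x ≤ c :=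
  le_of_tendsto ((hasDerivWithinAt_iff_tendsto_slope' self_notMem_Iio).1 (hψ x))
    (eventually_nhdsWithin_of_forall h)

lemma le_slope (hψ : IsLeftDeriv ρ ψ) (hρ : ConvexOn ℝ univ ρ) {x y : ℝ} (hxy : x < y) :
    ψ x ≤ slope ρ x y :=
  hψ.le_of_forall_slope_le fun t ht => by
    simpa only [slope_def_field] using hρ.secant_mono (mem_univ x) (mem_univ t) (mem_univ y)
      ht.ne hxy.ne' (ht.le.trans hxy.le)

lemma slope_le (hψ : IsLeftDeriv ρ ψ) (hρ : ConvexOn ℝ univ ρ) {x y : ℝ} (hxy : x < y) :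
    slope ρ x y ≤ ψ y :=
  hρ.slope_le_of_hasDerivWithinAt_Iio (mem_univ x) (mem_univ y) hxy (hψ y)

lemma monotone (hψ : IsLeftDeriv ρ ψ) (hρ : ConvexOn ℝ univ ρ) : Monotone ψ := by
  intro x y hxy
  rcases hxy.eq_or_lt with rfl | hlt
  · exact le_rfl
  · exact (hψ.le_slope hρ hlt).trans (hψ.slope_le hρ hlt)

lemma neg_of_neg (hψ : IsLeftDeriv ρ ψ) (hρ : LossClass ρ) {t : ℝ} (ht : t < 0) : ψ t < 0 := by
  refine (hψ.le_slope hρ.1 ht).trans_lt ?_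
  rw [slope_def_field, hρ.apply_zero]
  exact div_neg_of_neg_of_pos (by linarith [hρ.apply_pos ht.ne]) (by linarith)

lemma pos_of_pos (hψ : IsLeftDeriv ρ ψ) (hρ : LossClass ρ) {t : ℝ} (ht : 0 < t) : 0 < ψ t := by
  refine lt_of_lt_of_le ?_ (hψ.slope_le hρ.1 ht)
  rw [slope_def_field, hρ.apply_zero, sub_zero, sub_zero]
  exact div_pos (hρ.apply_pos ht.ne') ht

lemma nonpos_of_nonpos (hψ : IsLeftDeriv ρ ψ) (hρ : LossClass ρ) {t : ℝ} (ht : t ≤ 0) :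
    ψ t ≤ 0 := by
  refine (hψ.monotone hρ.1 ht).trans (hψ.le_of_forall_slope_le fun s hs => ?_)
  rw [slope_def_field, hρ.apply_zero, sub_zero, sub_zero]
  exact div_nonpos_of_nonneg_of_nonpos (hρ.2.1 s) hs.le

lemma abs_le_abs_of_le_of_nonpos (hψ : IsLeftDeriv ρ ψ) (hρ : LossClass ρ) {s t : ℝ}
    (hst : s ≤ t) (ht : t ≤ 0) : |ψ t| ≤ |ψ s| := by
  rw [abs_of_nonpos (hψ.nonpos_of_nonpos hρ ht),
    abs_of_nonpos (hψ.nonpos_of_nonpos hρ (hst.trans ht))]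
  exact neg_le_neg (hψ.monotone hρ.1 hst)

lemma abs_le_abs_of_pos_of_le (hψ : IsLeftDeriv ρ ψ) (hρ : LossClass ρ) {s t : ℝ}
    (hs : 0 < s) (hst : s ≤ t) : |ψ s| ≤ |ψ t| := by
  rw [abs_of_pos (hψ.pos_of_pos hρ hs), abs_of_pos (hψ.pos_of_pos hρ (hs.trans_le hst))]
  exact hψ.monotone hρ.1 hst

end IsLeftDeriv

section Gfun

variable {ρ ψ : ℝ → ℝ} {Q : Measure ℝ}

lemma Gfun_eq_setIntegral_div (θ : ℝ) :
    Gfun ψ Q θ = (∫ y in Iic θ, |ψ (y - θ)| ∂Q) / ∫ y, |ψ (y - θ)| ∂Q := by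
  rw [Gfun, ← integral_indicator measurableSet_Iic]
  congr 2 with y
  by_cases h : y ≤ θ <;> simp [h]

lemma Gfun_nonneg (θ : ℝ) : 0 ≤ Gfun ψ Q θ := by
  rw [Gfun_eq_setIntegral_div]
  exact div_nonneg (setIntegral_nonneg measurableSet_Iic fun _ _ => abs_nonneg _)
    (integral_nonneg fun _ => abs_nonneg _)

lemma one_sub_Gfun {θ : ℝ} (hint : Integrable (fun y => |ψ (y - θ)|) Q)
    (hden : ∫ y, |ψ (y - θ)| ∂Q ≠ 0) :
    1 - Gfun ψ Q θ = (∫ y in Ioi θ, |ψ (y - θ)| ∂Q) / ∫ y, |ψ (y - θ)| ∂Q := by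
  rw [Gfun_eq_setIntegral_div, one_sub_div hden,
    ← integral_add_compl measurableSet_Iic hint, compl_Iic, add_sub_cancel_left]

variable [IsFiniteMeasure Q] [NeZero Q] (hρ : LossClass ρ) (hψ : IsLeftDeriv ρ ψ)
  (hint : ∀ θ, Integrable (fun y => |ψ (y - θ)|) Q)
include hρ hψ hint

lemma exists_pos_eventually_le_integral_atTop :
    ∃ c > 0, ∀ᶠ θ in atTop, c ≤ ∫ y, |ψ (y - θ)| ∂Q := by
  obtain ⟨m, hm⟩ := ((tendsto_measure_Iic_atTop Q).eventually
    (lt_mem_nhds (Measure.measure_univ_pos.2 (NeZero.ne Q)))).exists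
  refine ⟨|ψ (-1)| * Q.real (Iic m),
    mul_pos (abs_pos.2 (hψ.neg_of_neg hρ neg_one_lt_zero).ne)
      (ENNReal.toReal_pos hm.ne' (measure_ne_top _ _)),
    eventually_atTop.2 ⟨m + 1, fun θ hθ => ?_⟩⟩
  calc |ψ (-1)| * Q.real (Iic m) ≤ ∫ y in Iic m, |ψ (y - θ)| ∂Q :=
        setIntegral_ge_of_const_le_real measurableSet_Iic (measure_ne_top _ _)
          (fun y hy => hψ.abs_le_abs_of_le_of_nonpos hρ (by rw [mem_Iic] at hy; linarith)
            (by norm_num)) (hint θ).integrableOn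
    _ ≤ ∫ y, |ψ (y - θ)| ∂Q :=
        setIntegral_le_integral (hint θ) (ae_of_all _ fun _ => abs_nonneg _)

lemma exists_pos_eventually_le_integral_atBot :
    ∃ c > 0, ∀ᶠ θ in atBot, c ≤ ∫ y, |ψ (y - θ)| ∂Q := by
  obtain ⟨m, hm⟩ := ((tendsto_measure_Ici_atBot Q).eventually
    (lt_mem_nhds (Measure.measure_univ_pos.2 (NeZero.ne Q)))).exists
  refine ⟨|ψ 1| * Q.real (Ici m),
    mul_pos (abs_pos.2 (hψ.pos_of_pos hρ one_pos).ne')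
      (ENNReal.toReal_pos hm.ne' (measure_ne_top _ _)),
    eventually_atBot.2 ⟨m - 1, fun θ hθ => ?_⟩⟩
  calc |ψ 1| * Q.real (Ici m) ≤ ∫ y in Ici m, |ψ (y - θ)| ∂Q :=
        setIntegral_ge_of_const_le_real measurableSet_Ici (measure_ne_top _ _)
          (fun y hy => hψ.abs_le_abs_of_pos_of_le hρ one_pos (by rw [mem_Ici] at hy; linarith))
          (hint θ).integrableOn
    _ ≤ ∫ y, |ψ (y - θ)| ∂Q :=
        setIntegral_le_integral (hint θ) (ae_of_all _ fun _ => abs_nonneg _)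

lemma tendsto_Gfun_atBot : Tendsto (Gfun ψ Q) atBot (𝓝 0) := by
  obtain ⟨c, hc, hden⟩ := exists_pos_eventually_le_integral_atBot hρ hψ hint
  have htail := (tendsto_setIntegral_Iic_atBot (hint 0)).div_const c
  rw [zero_div] at htail
  refine tendsto_of_tendsto_of_tendsto_of_le_of_le' tendsto_const_nhds htail
    (Eventually.of_forall Gfun_nonneg) ?_
  filter_upwards [hden, eventually_le_atBot 0] with θ hθ hθ0
  rw [Gfun_eq_setIntegral_div]
  refine div_le_div₀ (setIntegral_nonneg measurableSet_Iic fun _ _ => abs_nonneg _)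
    (setIntegral_mono_on (hint θ).integrableOn (hint 0).integrableOn measurableSet_Iic
      fun y hy => hψ.abs_le_abs_of_le_of_nonpos hρ ?_ ?_) hc hθ
  · linarith
  · rw [mem_Iic] at hy; linarith

lemma tendsto_Gfun_atTop : Tendsto (Gfun ψ Q) atTop (𝓝 1) := by
  obtain ⟨c, hc, hden⟩ := exists_pos_eventually_le_integral_atTop hρ hψ hint
  have htail := (tendsto_const_nhds (x := (1 : ℝ))).sub ((tendsto_setIntegral_Ioi_atTop (hint 0)).div_const c)
  rw [zero_div, sub_zero] at htail
  refine tendsto_of_tendsto_of_tendsto_of_le_of_le' htail tendsto_const_nhds ?_ ?_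
  · filter_upwards [hden, eventually_ge_atTop 0] with θ hθ hθ0
    rw [sub_le_comm, one_sub_Gfun (hint θ) (hc.trans_le hθ).ne']
    refine div_le_div₀ (setIntegral_nonneg measurableSet_Ioi fun _ _ => abs_nonneg _)
      (setIntegral_mono_on (hint θ).integrableOn (hint 0).integrableOn measurableSet_Ioi
        fun y hy => hψ.abs_le_abs_of_pos_of_le hρ ?_ ?_) hc hθ
    · rw [mem_Ioi] at hy; linarith
    · linarith
  · filter_upwards [hden] with θ hθ
    rw [← sub_nonneg, one_sub_Gfun (hint θ) (hc.trans_le hθ).ne']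
    exact div_nonneg (setIntegral_nonneg measurableSet_Ioi fun _ _ => abs_nonneg _)
      (integral_nonneg fun _ => abs_nonneg _)

lemma MQuant_mono {β γ : ℝ} (hβ : 0 < β) (hβγ : β ≤ γ) (hγ : γ < 1) :
    MQuant ψ Q β ≤ MQuant ψ Q γ := by
  obtain ⟨T, hT⟩ := eventually_atBot.1
    ((tendsto_Gfun_atBot hρ hψ hint).eventually (gt_mem_nhds hβ))
  obtain ⟨θ, hθ⟩ := ((tendsto_Gfun_atTop hρ hψ hint).eventually (lt_mem_nhds hγ)).exists
  refine csInf_le_csInf ⟨T, fun x hx => ?_⟩ ⟨θ, hθ.le⟩ fun x hx => hβγ.trans hx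
  by_contra! hxT
  exact (hT x hxT.le).not_ge hx

end Gfun

section MRegion

variable {d : ℕ} (ψ : ℝ → ℝ) (P : Measure (EuclideanSpace ℝ (Fin d)))

lemma isCompact_MRegion (α : ℝ) : IsCompact (MRegion ψ P α) :=
  Metric.isCompact_of_isClosed_isBounded
    (isClosed_biInter fun _ _ => isClosed_le continuous_const (continuous_const.inner continuous_id))
    (isBounded_of_forall_bddBelow_inner fun u hu =>
      ⟨MQuant ψ (dirProj P u) α, forall_mem_image.2 fun _ hz => mem_iInter₂.1 hz u hu⟩)

variable {ψ P} [IsProbabilityMeasure P]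

lemma MRegion_antitone {ρ : ℝ → ℝ} (hρ : LossClass ρ) (hψ : IsLeftDeriv ρ ψ)
    (hint : ∀ u : EuclideanSpace ℝ (Fin d), ‖u‖ = 1 → ∀ θ : ℝ,
      Integrable (fun t => |ψ (t - θ)|) (dirProj P u))
    {β γ : ℝ} (hβ : 0 < β) (hβγ : β ≤ γ) (hγ : γ < 1) : MRegion ψ P γ ⊆ MRegion ψ P β := by
  refine fun z hz => mem_iInter₂.2 fun u hu => ?_
  have : IsProbabilityMeasure (dirProj P u) :=
    Measure.isProbabilityMeasure_map (continuous_const.inner continuous_id).aemeasurable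
  exact (MQuant_mono hρ hψ (hint u hu) hβ hβγ hγ).trans (mem_iInter₂.1 hz u hu)

end MRegion

theorem stmt_8_general {d : ℕ} (ρ ψ : ℝ → ℝ) (hρ : LossClass ρ)
    (hψ : IsLeftDeriv ρ ψ)
    (P : Measure (EuclideanSpace ℝ (Fin d))) [IsProbabilityMeasure P]
    (hP2 : ∀ u : EuclideanSpace ℝ (Fin d), ‖u‖ = 1 → ∀ θ : ℝ,
      Integrable (fun t => |ψ (t - θ)|) (dirProj P u)) :
    ∃ zs : EuclideanSpace ℝ (Fin d),
      MDepth ψ P zs = ⨆ z : EuclideanSpace ℝ (Fin d), MDepth ψ P z :=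
  exists_nestedDepth_eq_iSup (fun _ _ hβ hβγ hγ => MRegion_antitone hρ hψ hP2 hβ hβγ hγ)
    fun β _ => isCompact_MRegion ψ P β

theorem stmt_8 {d : ℕ} (hd : 0 < d) (ρ ψ : ℝ → ℝ) (hρ : LossClass ρ)
    (hψ : IsLeftDeriv ρ ψ)
    (P : Measure (EuclideanSpace ℝ (Fin d))) [IsProbabilityMeasure P]
    (hP1 : ∀ u : EuclideanSpace ℝ (Fin d), ‖u‖ = 1 → ∀ c : ℝ, P {z | ⟪u, z⟫ = c} < 1)
    (hP2 : ∀ u : EuclideanSpace ℝ (Fin d), ‖u‖ = 1 → ∀ θ : ℝ,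
      Integrable (fun t => |ψ (t - θ)|) (dirProj P u)) :
    ∃ zs : EuclideanSpace ℝ (Fin d),
      MDepth ψ P zs = ⨆ z : EuclideanSpace ℝ (Fin d), MDepth ψ P z :=
  stmt_8_general ρ ψ hρ hψ P hP2
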